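/- Let P be the Petersen graph, let s and t be adjacent vertices of P, and let P' = P − {s,t}. For every neighbour l of s in P with l ≠ t and every neighbour r of t in P with r ≠ s, there exists a 2-colouring of V(P') such that: each colour class has exactly 4 vertices; every monochromatic component has at most 2 vertices; among the four degree-2 vertices of P', exactly l and r receive colour 1; and moreover r has a neighbour in P' coloured 1 while l has no neighbour in P' coloured 1 (the 'right (1,1)-balanced' colouring). -/

import Mathlib

/-- Vertices of the Petersen graph: 2-element subsets of {1,...,5} (modelled as `Fin 5`). -/
abbrev PetersenVert : Type := {p : Finset (Fin 5) // p.card = 2}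

/-- The Petersen graph as the Kneser graph K(5,2): two 2-subsets are adjacent iff disjoint. -/
def Petersen : SimpleGraph PetersenVert where
  Adj a b := Disjoint a.1 b.1
  symm := ⟨fun _ _ h => Disjoint.symm h⟩
  loopless := by
    constructor
    intro a h
    have ha : a.1 = ∅ := by simpa using disjoint_self.mp h
    have := a.2
    rw [ha] at this
    simp at this

/-- The vertex set of `P' = P − {s, t}`. -/
def avoidSet (s t : PetersenVert) : Set PetersenVert := {v | v ≠ s ∧ v ≠ t}

/-- `P' = P − {s, t}`: the subgraph of the Petersen graph induced on the vertices
different from `s` and `t`. -/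
def Pminus (s t : PetersenVert) : SimpleGraph (avoidSet s t) :=
  Petersen.induce (avoidSet s t)

/-- `v` is one of the (four) vertices of degree 2 of `P' = P − {s, t}`. -/
def IsDeg2 (s t : PetersenVert) (v : avoidSet s t) : Prop :=
  ((Pminus s t).neighborSet v).ncard = 2

/-!
Write `s = {a, b}`, `t = {c, d}` and let `e` be the fifth point. Then `l` is `{c, e}` or `{d, e}`
and `r` is `{a, e}` or `{b, e}`; say `l = {c, e}` and `r = {a, e}`. Give colour 1 to the vertices
of `P'` meeting `l ∩ t = {c}`, namely `ac, bc, ce`, and to `r = ae`; colour 2 goes to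
`ad, bd, de, be`. Each colour class induces one edge (`bc – ae`, resp. `ad – be`) and two isolated
vertices, so every vertex has at most one neighbour of its own colour and monochromatic
components have at most two vertices. The degree-2 vertices `ce, de, ae, be` are coloured as
required, `r` is adjacent to `bc`, and the neighbours `ad, bd` of `l` in `P'` have colour 2. The
remaining configurations are symmetric; all of them are verified by `decide`.
-/

namespace SimpleGraph

variable {V : Type*} {G : SimpleGraph V}

lemma Walk.eq_or_adj_of_subsingleton_neighborSet (h : ∀ v, (G.neighborSet v).Subsingleton)
    {u v : V} (p : G.Walk u v) : v = u ∨ G.Adj u v := by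
  induction p with
  | nil => exact .inl rfl
  | cons hua _ ih =>
    rcases ih with rfl | hav
    · exact .inr hua
    · exact .inl (h _ hav hua.symm)

lemma ConnectedComponent.ncard_supp_le_two (h : ∀ v, (G.neighborSet v).Subsingleton)
    (K : G.ConnectedComponent) : K.supp.ncard ≤ 2 := by
  obtain ⟨u, rfl⟩ := K.exists_rep
  have hsupp : (G.connectedComponentMk u).supp ⊆ insert u (G.neighborSet u) := by
    intro v hv
    obtain ⟨p⟩ := ConnectedComponent.exact hv.symm
    exact p.eq_or_adj_of_subsingleton_neighborSet h
  calc _ ≤ (insert u (G.neighborSet u)).ncard := Set.ncard_le_ncard hsupp ((h u).finite.insert u)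
    _ ≤ (G.neighborSet u).ncard + 1 := Set.ncard_insert_le _ _
    _ ≤ 1 + 1 := by grw [(Set.ncard_le_one (h u).finite).mpr fun a ha b hb => h u ha hb]

lemma ncard_supp_induce_monochromatic_le_two {α : Type*} (c : V → α)
    (h : ∀ v w₁ w₂, G.Adj v w₁ → G.Adj v w₂ → c w₁ = c v → c w₂ = c v → w₁ = w₂) (i : α)
    (K : (G.induce {v | c v = i}).ConnectedComponent) : K.supp.ncard ≤ 2 := by
  refine K.ncard_supp_le_two fun ⟨v, hv⟩ ⟨w₁, hw₁⟩ hvw₁ ⟨w₂, hw₂⟩ hvw₂ => ?_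
  simp only [Set.mem_ofPred_eq] at hv hw₁ hw₂
  exact Subtype.ext (h v w₁ w₂ hvw₁ hvw₂ (hw₁.trans hv.symm) (hw₂.trans hv.symm))

end SimpleGraph

instance : DecidableRel Petersen.Adj :=
  fun a b => inferInstanceAs (Decidable (Disjoint a.1 b.1))

instance (s t : PetersenVert) : DecidablePred (· ∈ avoidSet s t) :=
  fun v => inferInstanceAs (Decidable (v ≠ s ∧ v ≠ t))

instance (s t : PetersenVert) : DecidableRel (Pminus s t).Adj :=
  fun a b => inferInstanceAs (Decidable (Petersen.Adj a b))

lemma isDeg2_iff_degree_eq_two {s t : PetersenVert} {v : avoidSet s t} :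
    IsDeg2 s t v ↔ (Pminus s t).degree v = 2 := by
  rw [IsDeg2, Set.ncard_eq_toFinset_card', ← SimpleGraph.neighborFinset_def,
    SimpleGraph.card_neighborFinset_eq_degree]

/-- Colour `0 : Fin 2` plays the role of the paper's colour 1. -/
def rightBalancedColouring (s t l r : PetersenVert) (v : avoidSet s t) : Fin 2 :=
  if ¬ Disjoint (v : PetersenVert).1 (l.1 ∩ t.1) ∨ (v : PetersenVert) = r then 0 else 1

section rightBalancedColouring

variable (s t l r : PetersenVert)

set_option synthInstance.maxSize 5000

lemma rightBalancedColouring_zero_iff_of_degree_eq_two (hst : Petersen.Adj s t)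
    (hsl : Petersen.Adj s l) (hlt : l ≠ t) (htr : Petersen.Adj t r) (hrs : r ≠ s)
    (v : avoidSet s t) (hv : (Pminus s t).degree v = 2) :
    rightBalancedColouring s t l r v = 0 ↔ (v : PetersenVert) = l ∨ (v : PetersenVert) = r := by
  decide +revert

lemma card_rightBalancedColouring_eq_four (hst : Petersen.Adj s t) (hsl : Petersen.Adj s l)
    (hlt : l ≠ t) (htr : Petersen.Adj t r) (hrs : r ≠ s) (i : Fin 2) :
    {v : avoidSet s t | rightBalancedColouring s t l r v = i}.ncard = 4 := by
  rw [Set.ncard_eq_toFinset_card', Set.toFinset_ofPred]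
  decide +revert

set_option maxHeartbeats 1000000 in
lemma rightBalancedColouring_sameColour_neighbour_unique (hst : Petersen.Adj s t)
    (hsl : Petersen.Adj s l) (hlt : l ≠ t) (htr : Petersen.Adj t r) (hrs : r ≠ s)
    (v w₁ w₂ : avoidSet s t)
    (hw₁ : (Pminus s t).Adj v w₁) (hw₂ : (Pminus s t).Adj v w₂)
    (hc₁ : rightBalancedColouring s t l r w₁ = rightBalancedColouring s t l r v)
    (hc₂ : rightBalancedColouring s t l r w₂ = rightBalancedColouring s t l r v) : w₁ = w₂ := by
  decide +revert

lemma exists_adj_right_rightBalancedColouring_eq_zero (hst : Petersen.Adj s t)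
    (hsl : Petersen.Adj s l) (hlt : l ≠ t) (htr : Petersen.Adj t r) (hrs : r ≠ s) :
    ∃ w : avoidSet s t, Petersen.Adj r w ∧ rightBalancedColouring s t l r w = 0 := by
  decide +revert

lemma rightBalancedColouring_ne_zero_of_adj_left (hst : Petersen.Adj s t)
    (hsl : Petersen.Adj s l) (hlt : l ≠ t) (htr : Petersen.Adj t r) (hrs : r ≠ s)
    (w : avoidSet s t) (hw : Petersen.Adj l w) : rightBalancedColouring s t l r w ≠ 0 := by
  decide +revert

end rightBalancedColouring

/-- The "right (1,1)-balanced" colouring of the Petersen 4-pole: for adjacent vertices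
`s, t` of the Petersen graph, `P' = P − {s,t}`, a neighbour `l` of `s` (`l ≠ t`) and a
neighbour `r` of `t` (`r ≠ s`), there is a 2-colouring of `V(P')` (colour 1 is the value
`0 : Fin 2`) with colour classes of size 4, all monochromatic components of at most 2
vertices, in which among the four degree-2 vertices exactly `l` and `r` get colour 1, and
moreover `r` has a neighbour in `P'` coloured 1 while `l` has no neighbour in `P'`
coloured 1. -/
theorem right_one_one_balanced_colouring_exists (s t : PetersenVert) (hst : Petersen.Adj s t)
    (l r : PetersenVert) (hsl : Petersen.Adj s l) (hlt : l ≠ t)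
    (htr : Petersen.Adj t r) (hrs : r ≠ s) :
    ∃ c : avoidSet s t → Fin 2,
      {v : avoidSet s t | c v = 0}.ncard = 4 ∧
      {v : avoidSet s t | c v = 1}.ncard = 4 ∧
      (∀ i : Fin 2,
        ∀ K : ((Pminus s t).induce {v | c v = i}).ConnectedComponent, K.supp.ncard ≤ 2) ∧
      (∀ v : avoidSet s t, IsDeg2 s t v →
        (c v = 0 ↔ ((v : PetersenVert) = l ∨ (v : PetersenVert) = r))) ∧
      (∃ w : avoidSet s t, Petersen.Adj r (w : PetersenVert) ∧ c w = 0) ∧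
      (∀ w : avoidSet s t, Petersen.Adj l (w : PetersenVert) → c w ≠ 0) :=
  ⟨rightBalancedColouring s t l r,
    card_rightBalancedColouring_eq_four s t l r hst hsl hlt htr hrs 0,
    card_rightBalancedColouring_eq_four s t l r hst hsl hlt htr hrs 1,
    SimpleGraph.ncard_supp_induce_monochromatic_le_two _
      (rightBalancedColouring_sameColour_neighbour_unique s t l r hst hsl hlt htr hrs),
    fun v hv => rightBalancedColouring_zero_iff_of_degree_eq_two s t l r hst hsl hlt htr hrs v
      (isDeg2_iff_degree_eq_two.mp hv),
    exists_adj_right_rightBalancedColouring_eq_zero s t l r hst hsl hlt htr hrs,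
    rightBalancedColouring_ne_zero_of_adj_left s t l r hst hsl hlt htr hrs⟩
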